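/- Gramian representation of the observation integral and its computation via a block exponential: let A be an n×n real matrix, c ∈ ℝⁿ, T ≥ 0, and define the Gramian W(T) = ∫_0^T exp(Aᵀt)·c cᵀ·exp(At) dt. Then (i) for every x ∈ ℝⁿ, ∫_0^T (⟨c, exp(At)x⟩)² dt = ⟨x, W(T)x⟩; and (ii) writing exp( T·[[−Aᵀ, c cᵀ],[0, A]] ) = [[F₁₁, F₁₂],[0, F₂₂]], one has W(T) = F₂₂ᵀ·F₁₂. -/

import Mathlib

open Matrix MeasureTheory NormedSpace

/-!
Put `M = [[-Aᵀ, c cᵀ], [0, A]]` and `F(t) = exp (t • M)`. Since `M` is block upper triangular,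
the powers of `M` have `A ^ k` as their lower right block, so `F₂₂(t) = exp (t • A)`, and
differentiating `F` gives `F₁₂' = -Aᵀ F₁₂ + c cᵀ exp (t • A)`. Hence
`d/dt (exp (t • Aᵀ) F₁₂(t)) = exp (t • Aᵀ) c cᵀ exp (t • A)`, and since `F₁₂(0) = 0` the
fundamental theorem of calculus gives `W(T) = exp (T • Aᵀ) F₁₂(T) = F₂₂(T)ᵀ F₁₂(T)`.
Part (i) is the identity `xᵀ Eᵀ c cᵀ E x = ⟨c, E x⟩²` integrated entrywise.
-/

namespace Matrix

theorem dotProduct_mulVec_transpose_mul_vecMulVec_mul {R n : Type*} [CommRing R] [Fintype n]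
    (M : Matrix n n R) (c x : n → R) :
    x ⬝ᵥ (Mᵀ * vecMulVec c c * M) *ᵥ x = (c ⬝ᵥ M *ᵥ x) ^ 2 := by
  rw [← mulVec_mulVec, ← mulVec_mulVec, dotProduct_mulVec, vecMul_transpose, vecMulVec_mulVec,
    dotProduct_smul, dotProduct_comm, MulOpposite.smul_eq_mul_unop, MulOpposite.unop_op, sq]

theorem intervalIntegral_dotProduct_mulVec {m n : Type*} [Fintype m] [Fintype n]
    {f : ℝ → Matrix m n ℝ} {a b : ℝ} {μ : Measure ℝ}
    (hf : ∀ i j, IntervalIntegrable (fun t => f t i j) μ a b) (x : m → ℝ) (y : n → ℝ) :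
    ∫ t in a..b, x ⬝ᵥ f t *ᵥ y ∂μ = x ⬝ᵥ (of fun i j => ∫ t in a..b, f t i j ∂μ) *ᵥ y := by
  have hrow : ∀ i, IntervalIntegrable (fun t => ∑ j, f t i j * y j) μ a b := fun i => by
    simpa only [Finset.sum_fn] using
      IntervalIntegrable.sum Finset.univ fun j _ => (hf i j).mul_const (y j)
  simp only [dotProduct, mulVec, of_apply]
  rw [intervalIntegral.integral_finsetSum fun i _ => (hrow i).const_mul (x i)]
  refine Finset.sum_congr rfl fun i _ => ?_
  rw [intervalIntegral.integral_const_mul,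
    intervalIntegral.integral_finsetSum fun j _ => (hf i j).mul_const (y j)]
  simp only [intervalIntegral.integral_mul_const]

theorem exists_fromBlocks_zero₂₁_pow {α l m : Type*} [Fintype l] [Fintype m] [DecidableEq l]
    [DecidableEq m] [Semiring α] (A : Matrix l l α) (B : Matrix l m α) (D : Matrix m m α)
    (k : ℕ) : ∃ X, fromBlocks A B 0 D ^ k = fromBlocks (A ^ k) X 0 (D ^ k) := by
  induction k with
  | zero => exact ⟨0, by simp [fromBlocks_one]⟩
  | succ k ih =>
    obtain ⟨X, hX⟩ := ih
    exact ⟨A ^ k * B + X * D, by simp [pow_succ, hX, fromBlocks_multiply]⟩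

section OperatorNorm

open scoped Norms.Operator

theorem _root_.HasDerivAt.matrix_apply {m n : Type*} [Fintype m] [Fintype n]
    {F : ℝ → Matrix m n ℝ} {F' : Matrix m n ℝ} {t : ℝ} (h : HasDerivAt F F' t) (i : m) (j : n) :
    HasDerivAt (fun u => F u i j) (F' i j) t :=
  (entryLinearMap ℝ ℝ i j).toContinuousLinearMap.hasFDerivAt.comp_hasDerivAt t h

variable {n : Type*} [Fintype n] [DecidableEq n]

theorem toBlocks₂₂_exp_fromBlocks_zero₂₁ {l : Type*} [Fintype l] [DecidableEq l]
    (A : Matrix l l ℝ) (B : Matrix l n ℝ) (D : Matrix n n ℝ) :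
    (exp (fromBlocks A B 0 D)).toBlocks₂₂ = exp D := by
  -- The global `CompleteSpace` instance on matrices is for the product uniformity, which is not
  -- syntactically the one of the operator norm, so completeness is supplied by hand.
  have := FiniteDimensional.complete ℝ (Matrix (l ⊕ n) (l ⊕ n) ℝ)
  have := FiniteDimensional.complete ℝ (Matrix n n ℝ)
  ext i j
  have hM := Pi.hasSum.1 (Pi.hasSum.1 (exp_series_hasSum_exp' (𝕂 := ℝ) (fromBlocks A B 0 D))
    (Sum.inr i)) (Sum.inr j)
  have hD := Pi.hasSum.1 (Pi.hasSum.1 (exp_series_hasSum_exp' (𝕂 := ℝ) D) i) j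
  have hterm : ∀ k : ℕ, ((k.factorial⁻¹ : ℝ) • fromBlocks A B 0 D ^ k) (.inr i) (.inr j) =
      ((k.factorial⁻¹ : ℝ) • D ^ k) i j := fun k => by
    obtain ⟨X, hX⟩ := exists_fromBlocks_zero₂₁_pow A B D k
    simp [hX]
  simp only [hterm] at hM
  exact hM.unique hD

theorem toBlocks₂₂_exp_smul_fromBlocks_zero₂₁ (A B D : Matrix n n ℝ) (t : ℝ) :
    (exp (t • fromBlocks A B 0 D)).toBlocks₂₂ = exp (t • D) := by
  rw [fromBlocks_smul, smul_zero, toBlocks₂₂_exp_fromBlocks_zero₂₁]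

theorem continuous_exp_smul_mul_mul_exp_smul (B Q A : Matrix n n ℝ) :
    Continuous fun t : ℝ => exp (t • B) * Q * exp (t • A) :=
  have := FiniteDimensional.complete ℝ (Matrix n n ℝ)
  ((differentiable_exp_smul_const ℝ B).continuous.mul continuous_const).mul
    (differentiable_exp_smul_const ℝ A).continuous

theorem hasDerivAt_toBlocks₁₂_exp_smul_fromBlocks_zero₂₁ (A B D : Matrix n n ℝ) (t : ℝ) :
    HasDerivAt (fun u : ℝ => (exp (u • fromBlocks A B 0 D)).toBlocks₁₂)
      (A * (exp (t • fromBlocks A B 0 D)).toBlocks₁₂ + B * exp (t • D)) t := by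
  have := FiniteDimensional.complete ℝ (Matrix (n ⊕ n) (n ⊕ n) ℝ)
  let P : Matrix (n ⊕ n) (n ⊕ n) ℝ →ₗ[ℝ] Matrix n n ℝ :=
    { toFun := toBlocks₁₂, map_add' := fun _ _ => rfl, map_smul' := fun _ _ => rfl }
  have hblock : (fromBlocks A B 0 D * exp (t • fromBlocks A B 0 D)).toBlocks₁₂ =
      A * (exp (t • fromBlocks A B 0 D)).toBlocks₁₂ + B * exp (t • D) := by
    rw [← toBlocks₂₂_exp_smul_fromBlocks_zero₂₁ A B D t]
    conv_lhs => rw [← fromBlocks_toBlocks (exp (t • fromBlocks A B 0 D))]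
    simp [fromBlocks_multiply]
  exact (P.toContinuousLinearMap.hasFDerivAt.comp_hasDerivAt t
    (hasDerivAt_exp_smul_const' (fromBlocks A B 0 D) t)).congr_deriv hblock

theorem hasDerivAt_exp_smul_mul_toBlocks₁₂ (B Q A : Matrix n n ℝ) (t : ℝ) :
    HasDerivAt (fun u : ℝ => exp (u • B) * (exp (u • fromBlocks (-B) Q 0 A)).toBlocks₁₂)
      (exp (t • B) * Q * exp (t • A)) t := by
  have := FiniteDimensional.complete ℝ (Matrix n n ℝ)
  set F := (exp (t • fromBlocks (-B) Q 0 A)).toBlocks₁₂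
  have hsum : exp (t • B) * B * F + exp (t • B) * (-B * F + Q * exp (t • A)) =
      exp (t • B) * Q * exp (t • A) := by
    noncomm_ring
  exact ((hasDerivAt_exp_smul_const B t).mul
    (hasDerivAt_toBlocks₁₂_exp_smul_fromBlocks_zero₂₁ (-B) Q A t)).congr_deriv hsum

end OperatorNorm

theorem integral_exp_smul_mul_mul_exp_smul {n : Type*} [Fintype n] [DecidableEq n]
    (B Q A : Matrix n n ℝ) (T : ℝ) :
    of (fun i j => ∫ t in (0 : ℝ)..T, (exp (t • B) * Q * exp (t • A)) i j) =
      exp (T • B) * (exp (T • fromBlocks (-B) Q 0 A)).toBlocks₁₂ := by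
  ext i j
  rw [of_apply, intervalIntegral.integral_eq_sub_of_hasDerivAt
    (fun t _ => (hasDerivAt_exp_smul_mul_toBlocks₁₂ B Q A t).matrix_apply i j)
    (((continuous_exp_smul_mul_mul_exp_smul B Q A).matrix_elem i j).intervalIntegrable 0 T)]
  simp [← fromBlocks_one]

end Matrix

theorem gramian_representation_and_block_exponential_general
    (n : ℕ) (A : Matrix (Fin n) (Fin n) ℝ) (c : Fin n → ℝ) (T : ℝ) :
    (∀ x : Fin n → ℝ,
        (∫ t in (0 : ℝ)..T, (c ⬝ᵥ (NormedSpace.exp (t • A)).mulVec x) ^ 2)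
          = x ⬝ᵥ (Matrix.of fun i j => ∫ t in (0 : ℝ)..T,
              (NormedSpace.exp (t • Aᵀ) * Matrix.vecMulVec c c *
                NormedSpace.exp (t • A)) i j).mulVec x)
    ∧ (Matrix.of fun i j => ∫ t in (0 : ℝ)..T,
          (NormedSpace.exp (t • Aᵀ) * Matrix.vecMulVec c c *
            NormedSpace.exp (t • A)) i j)
        = ((NormedSpace.exp
              (T • Matrix.fromBlocks (-Aᵀ) (Matrix.vecMulVec c c) 0 A)).toBlocks₂₂)ᵀ *
            (NormedSpace.exp
              (T • Matrix.fromBlocks (-Aᵀ) (Matrix.vecMulVec c c) 0 A)).toBlocks₁₂ := by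
  have hexp_transpose (t : ℝ) : exp (t • Aᵀ) = (exp (t • A))ᵀ := by
    rw [← transpose_smul, exp_transpose]
  refine ⟨fun x => ?_, ?_⟩
  · rw [← intervalIntegral_dotProduct_mulVec fun i j =>
      ((continuous_exp_smul_mul_mul_exp_smul _ _ A).matrix_elem i j).intervalIntegrable 0 T]
    simp only [hexp_transpose, dotProduct_mulVec_transpose_mul_vecMulVec_mul]
  · rw [toBlocks₂₂_exp_smul_fromBlocks_zero₂₁, ← hexp_transpose]
    exact integral_exp_smul_mul_mul_exp_smul _ _ _ T

/-- Gramian representation of the observation integral and its computation via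
a block exponential: with `W(T) = ∫_0^T exp(Aᵀt)·c cᵀ·exp(At) dt` (entrywise),
(i) `∫_0^T ⟨c, exp(At)x⟩² dt = ⟨x, W(T)x⟩` for all `x`, and
(ii) writing `exp(T·[[−Aᵀ, c cᵀ],[0, A]]) = [[F₁₁, F₁₂],[0, F₂₂]]`, one has
`W(T) = F₂₂ᵀ·F₁₂`. -/
theorem gramian_representation_and_block_exponential
    (n : ℕ) (A : Matrix (Fin n) (Fin n) ℝ) (c : Fin n → ℝ) (T : ℝ) (hT : 0 ≤ T) :
    (∀ x : Fin n → ℝ,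
        (∫ t in (0 : ℝ)..T, (c ⬝ᵥ (NormedSpace.exp (t • A)).mulVec x) ^ 2)
          = x ⬝ᵥ (Matrix.of fun i j => ∫ t in (0 : ℝ)..T,
              (NormedSpace.exp (t • Aᵀ) * Matrix.vecMulVec c c *
                NormedSpace.exp (t • A)) i j).mulVec x)
    ∧ (Matrix.of fun i j => ∫ t in (0 : ℝ)..T,
          (NormedSpace.exp (t • Aᵀ) * Matrix.vecMulVec c c *
            NormedSpace.exp (t • A)) i j)
        = ((NormedSpace.exp
              (T • Matrix.fromBlocks (-Aᵀ) (Matrix.vecMulVec c c) 0 A)).toBlocks₂₂)ᵀ *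
            (NormedSpace.exp
              (T • Matrix.fromBlocks (-Aᵀ) (Matrix.vecMulVec c c) 0 A)).toBlocks₁₂ :=
  gramian_representation_and_block_exponential_general n A c T
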